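/- ρ is a metric on 𝒞, and the metric space (𝒞, ρ) is complete: every ρ-Cauchy sequence in 𝒞 converges with respect to ρ to an element of 𝒞. -/

import Mathlib

open MeasureTheory ProbabilityTheory Filter Set Function

noncomputable section

/-- A utility function `u` together with its first and second derivatives, satisfying
`u' > 0`, `u'' < 0` on `(0, ∞)`, `u'(c) → ∞` as `c → 0⁺` and `u'(c) → 0` as `c → ∞`. -/
structure Util where
  u : ℝ → ℝ
  u' : ℝ → ℝ
  u'' : ℝ → ℝ
  hasDeriv : ∀ x : ℝ, 0 < x → HasDerivAt u (u' x) x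
  hasDeriv2 : ∀ x : ℝ, 0 < x → HasDerivAt u' (u'' x) x
  u'_pos : ∀ x : ℝ, 0 < x → 0 < u' x
  u''_neg : ∀ x : ℝ, 0 < x → u'' x < 0
  u'_tendsto_atTop : Tendsto u' (nhdsWithin 0 (Ioi 0)) atTop
  u'_tendsto_zero : Tendsto u' atTop (nhds 0)

/-- The setup of the income fluctuation problem: `Z` is a Borel subset of `ℝ^m`, `P` is a
Feller Markov kernel on `Z`, `ν, μ` are the laws of the i.i.d. innovations `ζ, η`,
and `R, Y` are the nonnegative measurable return and income functions; `β ∈ [0,1)`. -/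
structure IFP (E1 E2 : Type) [MeasurableSpace E1] [MeasurableSpace E2] where
  m : ℕ
  Z : Set (Fin m → ℝ)
  hZ : MeasurableSet Z
  P : Kernel Z Z
  hP : IsMarkovKernel P
  ν : Measure E1
  μ : Measure E2
  hν : IsProbabilityMeasure ν
  hμ : IsProbabilityMeasure μ
  R : Z → E1 → ℝ
  Y : Z → E2 → ℝ
  R_nonneg : ∀ z ζ, 0 ≤ R z ζ
  Y_nonneg : ∀ z η, 0 ≤ Y z η
  R_meas : Measurable fun w : Z × E1 => R w.1 w.2
  Y_meas : Measurable fun w : Z × E2 => Y w.1 w.2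
  β : ℝ
  β_nonneg : 0 ≤ β
  β_lt_one : β < 1
  feller : ∀ h : Z → ℝ, Continuous h → (∃ M, ∀ z, |h z| ≤ M) →
    Continuous fun z : Z => ∫ z', h z' ∂(P z)

variable {E1 E2 : Type} [MeasurableSpace E1] [MeasurableSpace E2]

instance (S : IFP E1 E2) : IsMarkovKernel S.P := S.hP
instance (S : IFP E1 E2) : IsProbabilityMeasure S.ν := S.hν
instance (S : IFP E1 E2) : IsProbabilityMeasure S.μ := S.hμ

namespace IFP

/-- The joint law of `(ẑ, ζ̂, η̂)` over one step, given the current exogenous state `z`. -/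
def Em (S : IFP E1 E2) (z : S.Z) : Measure (S.Z × E1 × E2) := (S.P z).prod (S.ν.prod S.μ)

/-- `E_z[R̂]`. -/
def ER (S : IFP E1 E2) (z : S.Z) : ℝ := ∫ w, S.R w.1 w.2.1 ∂(S.Em z)

/-- `E_z[Ŷ]`. -/
def EY1 (S : IFP E1 E2) (z : S.Z) : ℝ := ∫ w, S.Y w.1 w.2.2 ∂(S.Em z)

/-- `E_z[R̂ ⬝ u'(Ŷ)]`. -/
def ERuY (S : IFP E1 E2) (u' : ℝ → ℝ) (z : S.Z) : ℝ :=
  ∫ w, S.R w.1 w.2.1 * u' (S.Y w.1 w.2.2) ∂(S.Em z)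

/-- `E_z[u'(Ŷ)]`. -/
def EuY (S : IFP E1 E2) (u' : ℝ → ℝ) (z : S.Z) : ℝ := ∫ w, u' (S.Y w.1 w.2.2) ∂(S.Em z)

/-- `E_z[R_1 ⋯ R_n]`, computed via the Markov property. -/
def ERprod (S : IFP E1 E2) : ℕ → S.Z → ℝ
  | 0 => fun _ => 1
  | n + 1 => fun z => ∫ w, S.R w.1 w.2.1 * ERprod S n w.1 ∂(S.Em z)

/-- Iteration of the exogenous kernel `P` on functions. -/
def iterP (S : IFP E1 E2) : ℕ → (S.Z → ℝ) → S.Z → ℝ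
  | 0, f => f
  | n + 1, f => fun z => ∫ z', iterP S n f z' ∂(S.P z)

/-- `E_z[Y_t]` for `t ≥ 1`. -/
def EzY (S : IFP E1 E2) (t : ℕ) : S.Z → ℝ := iterP S (t - 1) S.EY1

/-- Assumption (I): `β^n ⬝ sup_z E_z[R_1 ⋯ R_n] < 1` for some `n ≥ 1`. -/
def AssumptionI (S : IFP E1 E2) : Prop :=
  ∃ n : ℕ, 0 < n ∧ BddAbove (range (ERprod S n)) ∧ S.β ^ n * sSup (range (ERprod S n)) < 1

/-- Assumption (II): `Σ_{t≥1} β^t E_z[Y_t] < ∞` for every `z`. -/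
def AssumptionII (S : IFP E1 E2) : Prop :=
  ∀ z : S.Z, Summable fun t : ℕ => S.β ^ (t + 1) * EzY S (t + 1) z

/-- Assumption (III): `sup_z E_z[R̂] < ∞`, `sup_z E_z[u'(Ŷ)] < ∞`, `sup_z E_z[R̂ u'(Ŷ)] < ∞`. -/
def AssumptionIII (S : IFP E1 E2) (u' : ℝ → ℝ) : Prop :=
  BddAbove (range S.ER) ∧ BddAbove (range (S.EuY u')) ∧ BddAbove (range (S.ERuY u'))

/-- Assumption (IV): continuity in `z` of `R`, `Y`, `E_z[R̂]` and `E_z[R̂ u'(Ŷ)]`. -/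
def AssumptionIV (S : IFP E1 E2) (u' : ℝ → ℝ) : Prop :=
  (∀ ζ, Continuous fun z : S.Z => S.R z ζ) ∧ (∀ η, Continuous fun z : S.Z => S.Y z η) ∧
    Continuous S.ER ∧ Continuous (S.ERuY u')

/-- Assumption (V), for a given `α ∈ (0,1)`:
`β E_z[R̂ u'(R̂(1-α)a)] ≤ u'(a)` on `S₀`, and `(1-α)^n sup_z E_z[R_1⋯R_n] < 1` for some `n`. -/
def AssumptionV (S : IFP E1 E2) (u' : ℝ → ℝ) (α : ℝ) : Prop :=
  0 < α ∧ α < 1 ∧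
    (∀ a : ℝ, 0 < a → ∀ z : S.Z,
      S.β * ∫ w, S.R w.1 w.2.1 * u' (S.R w.1 w.2.1 * (1 - α) * a) ∂(S.Em z) ≤ u' a) ∧
    ∃ n : ℕ, 0 < n ∧ BddAbove (range (ERprod S n)) ∧
      (1 - α) ^ n * sSup (range (ERprod S n)) < 1

/-- Assumption (VI): `sup_{t ≥ 1} E_z[Y_t] < ∞` for every `z`. -/
def AssumptionVI (S : IFP E1 E2) : Prop := ∀ z : S.Z, BddAbove (range fun t : ℕ => EzY S (t + 1) z)

/-- `t`-step transition probabilities of the exogenous kernel `P`. -/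
def Pt (S : IFP E1 E2) : ℕ → S.Z → Measure S.Z
  | 0 => fun z => Measure.dirac z
  | t + 1 => fun z => (Pt S t z).bind fun z' => S.P z'

/-- Assumption (VII): `P` is bounded in probability (tightness of `{P^t(z,⬝)}ₜ`). -/
def AssumptionVII (S : IFP E1 E2) : Prop :=
  ∀ z : S.Z, ∀ ε : ENNReal, 0 < ε → ∃ K : Set S.Z, IsCompact K ∧ ∀ t, Pt S t z Kᶜ ≤ ε

/-- The candidate class `𝒞`: continuous on `S₀`, increasing in assets, `0 < c(a,z) ≤ a`,
and `u' ∘ c` within bounded distance of `u'`. -/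
def MemC (S : IFP E1 E2) (u' : ℝ → ℝ) (c : ℝ → S.Z → ℝ) : Prop :=
  ContinuousOn (fun p : ℝ × S.Z => c p.1 p.2) {p : ℝ × S.Z | 0 < p.1} ∧
    (∀ z : S.Z, ∀ a b : ℝ, 0 < a → a ≤ b → c a z ≤ c b z) ∧
    (∀ (a : ℝ) (z : S.Z), 0 < a → 0 < c a z ∧ c a z ≤ a) ∧
    ∃ M : ℝ, ∀ (a : ℝ) (z : S.Z), 0 < a → |u' (c a z) - u' a| ≤ M

/-- The metric `ρ(c,d) = sup_{(a,z) ∈ S₀} |u'(c(a,z)) - u'(d(a,z))|`. -/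
def rho (S : IFP E1 E2) (u' : ℝ → ℝ) (c d : ℝ → S.Z → ℝ) : ℝ :=
  sSup ((fun p : ℝ × S.Z => |u' (c p.1 p.2) - u' (d p.1 p.2)|) '' {p : ℝ × S.Z | 0 < p.1})

/-- `β ⬝ E_z[ R̂ ⬝ u'(c(R̂ s + Ŷ, ẑ)) ]`, where `s` is the amount saved. -/
def EulerExp (S : IFP E1 E2) (u' : ℝ → ℝ) (c : ℝ → S.Z → ℝ) (s : ℝ) (z : S.Z) : ℝ :=
  S.β * ∫ w, S.R w.1 w.2.1 * u' (c (S.R w.1 w.2.1 * s + S.Y w.1 w.2.2) w.1) ∂(S.Em z)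

/-- `Tc` is a version of the Coleman operator applied to `c`: for every `(a,z) ∈ S₀`,
`Tc(a,z)` is the `ξ ∈ (0,a]` solving `u'(ξ) = max{β E_z[R̂ u'(c(R̂(a-ξ)+Ŷ,ẑ))], u'(a)}`. -/
def ColemanEq (S : IFP E1 E2) (u' : ℝ → ℝ) (c Tc : ℝ → S.Z → ℝ) : Prop :=
  ∀ (a : ℝ) (z : S.Z), 0 < a →
    0 < Tc a z ∧ Tc a z ≤ a ∧ u' (Tc a z) = max (EulerExp S u' c (a - Tc a z) z) (u' a)

/-- `c` is a fixed point of the Coleman operator on `S₀`. -/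
def FixedPointEq (S : IFP E1 E2) (u' : ℝ → ℝ) (c : ℝ → S.Z → ℝ) : Prop :=
  ∀ (a : ℝ) (z : S.Z), 0 < a → u' (c a z) = max (EulerExp S u' c (a - c a z) z) (u' a)

/-- A feasible policy: Borel measurable on `S₀`, with `0 ≤ c(a,z) ≤ a`. -/
def Feasible (S : IFP E1 E2) (c : ℝ → S.Z → ℝ) : Prop :=
  Measurable ({p : ℝ × S.Z | 0 < p.1}.restrict fun p : ℝ × S.Z => c p.1 p.2) ∧
    ∀ (a : ℝ) (z : S.Z), 0 < a → 0 ≤ c a z ∧ c a z ≤ a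

/-- `E_{a,z}[f(a_t, z_t)]` along the asset path generated by the policy `c`,
computed by iterating the one-step transition. -/
def EpathC (S : IFP E1 E2) (c : ℝ → S.Z → ℝ) : ℕ → (ℝ → S.Z → ℝ) → ℝ → S.Z → ℝ
  | 0, f => f
  | t + 1, f => fun a z =>
      ∫ w, EpathC S c t f (S.R w.1 w.2.1 * (a - c a z) + S.Y w.1 w.2.2) w.1 ∂(S.Em z)

/-- The lifetime value `V_c(a,z) = E_{a,z} Σ_{t≥0} β^t u(c(a_t,z_t)) ∈ {-∞} ∪ ℝ`,
realized as the limit (`liminf`) of the partial sums in `EReal`. -/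
def V (S : IFP E1 E2) (u : ℝ → ℝ) (c : ℝ → S.Z → ℝ) (a : ℝ) (z : S.Z) : EReal :=
  liminf (fun T : ℕ =>
    ((∑ t ∈ Finset.range T, S.β ^ t * EpathC S c t (fun a' z' => u (c a' z')) a z : ℝ) : EReal))
    atTop

/-- `c` is an optimal policy: it is feasible and dominates every feasible policy on `S₀`. -/
def Optimal (S : IFP E1 E2) (u : ℝ → ℝ) (c : ℝ → S.Z → ℝ) : Prop :=
  Feasible S c ∧ ∀ d : ℝ → S.Z → ℝ, Feasible S d →
    ∀ (a : ℝ) (z : S.Z), 0 < a → V S u d a z ≤ V S u c a z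

/-- The first-order optimality conditions. -/
def FOC (S : IFP E1 E2) (u' : ℝ → ℝ) (c : ℝ → S.Z → ℝ) : Prop :=
  ∀ (a : ℝ) (z : S.Z), 0 < a →
    EulerExp S u' c (a - c a z) z ≤ u' (c a z) ∧
      (c a z < a → u' (c a z) = EulerExp S u' c (a - c a z) z)

/-- The transversality condition: `β^t E_{a,z}[u'(c(a_t,z_t)) a_t] → 0`. -/
def Transversality (S : IFP E1 E2) (u' : ℝ → ℝ) (c : ℝ → S.Z → ℝ) : Prop :=
  ∀ (a : ℝ) (z : S.Z), 0 < a →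
    Tendsto (fun t : ℕ => S.β ^ t * EpathC S c t (fun a' z' => u' (c a' z') * a') a z)
      atTop (nhds 0)

/-- `E_{a,z}[ã_t]` along the maximal asset path `ã_{t+1} = R_{t+1} ã_t + Y_{t+1}`. -/
def EAmax (S : IFP E1 E2) : ℕ → ℝ → S.Z → ℝ
  | 0 => fun a _ => a
  | t + 1 => fun a z => ∫ w, EAmax S t (S.R w.1 w.2.1 * a + S.Y w.1 w.2.2) w.1 ∂(S.Em z)

/-- The stochastic kernel `Q` of the state process `(a_t, z_t)` controlled by the policy `c`. -/
def Qmeas (S : IFP E1 E2) (c : ℝ → S.Z → ℝ) (s : ℝ × S.Z) : Measure (ℝ × S.Z) :=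
  (S.Em s.2).map fun w => (S.R w.1 w.2.1 * (s.1 - c s.1 s.2) + S.Y w.1 w.2.2, w.1)

/-- `t`-step transition probabilities of `Q`. -/
def Qiter (S : IFP E1 E2) (c : ℝ → S.Z → ℝ) : ℕ → ℝ × S.Z → Measure (ℝ × S.Z)
  | 0 => fun s => Measure.dirac s
  | t + 1 => fun s => (Qiter S c t s).bind (Qmeas S c)

/-- `ψ` is a stationary probability distribution of `Q`, supported on `S = [0,∞) × Z`. -/
def Stationary (S : IFP E1 E2) (c : ℝ → S.Z → ℝ) (ψ : Measure (ℝ × S.Z)) : Prop :=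
  IsProbabilityMeasure ψ ∧ ψ {p : ℝ × S.Z | p.1 < 0} = 0 ∧ ψ.bind (Qmeas S c) = ψ

/-- `u'inv` is the inverse of `u'` as a bijection of `(0,∞)`. -/
def IsUInv (u' u'inv : ℝ → ℝ) : Prop :=
  (∀ x : ℝ, 0 < x → u'inv (u' x) = x) ∧ ∀ y : ℝ, 0 < y → 0 < u'inv y ∧ u' (u'inv y) = y

/-- Assumption (VIII): for every `z` and every `c ∈ 𝒞` concave in assets, the map
`s ↦ (u')⁻¹(β E_z[R̂ u'(c(R̂ s + Ŷ, ẑ))])` is concave on `[0, ∞)`. -/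
def AssumptionVIII (S : IFP E1 E2) (u' u'inv : ℝ → ℝ) : Prop :=
  ∀ (z : S.Z) (c : ℝ → S.Z → ℝ), MemC S u' c →
    (∀ z' : S.Z, ConcaveOn ℝ (Ioi 0) fun a => c a z') →
    ConcaveOn ℝ (Ici 0) fun s => u'inv (EulerExp S u' c s z)

/-- Assumption (IX): density representations `p(z'|z)` (w.r.t. `ϑ`) for `P` and
`f_L(y|z)` (w.r.t. Lebesgue) for the income, positive on suitable sets. -/
def AssumptionIX (S : IFP E1 E2) (ϑ : Measure S.Z) (pdens : S.Z → S.Z → ℝ) (fL : ℝ → S.Z → ℝ)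
    (C : Set S.Z) : Prop :=
  ϑ ≠ 0 ∧
    (∀ (z : S.Z) (A : Set S.Z), MeasurableSet A →
      S.P z A = ∫⁻ z' in A, ENNReal.ofReal (pdens z' z) ∂ϑ) ∧
    (∀ (z : S.Z) (B : Set ℝ), MeasurableSet B →
      S.μ.map (fun η => S.Y z η) B = ∫⁻ y in B, ENNReal.ofReal (fL y z) ∂(volume : Measure ℝ)) ∧
    IsCompact C ∧ (interior C).Nonempty ∧
    (∀ z ∈ C, ∀ Uo : Set S.Z, IsOpen Uo → z ∈ Uo → 0 < ϑ Uo) ∧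
    (∀ z' ∈ C, ∀ z : S.Z, 0 < pdens z' z) ∧
    (∀ z' : S.Z, Continuous fun z : S.Z => pdens z' z) ∧
    ∃ δY : ℝ, 0 < δY ∧ ∀ y ∈ Ioo (0 : ℝ) δY, ∀ z ∈ C, 0 < fL y z

/-- Assumption (X): a density `f_C(r|z)` for returns, positive near `0` on `C`, and the
geometric drift condition `E_z[Y_2] ≤ q E_z[Y_1] + q'`. -/
def AssumptionX (S : IFP E1 E2) (fC : ℝ → S.Z → ℝ) (C : Set S.Z) : Prop :=
  (∀ (z : S.Z) (B : Set ℝ), MeasurableSet B →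
    S.ν.map (fun ζ => S.R z ζ) B = ∫⁻ r in B, ENNReal.ofReal (fC r z) ∂(volume : Measure ℝ)) ∧
    (∃ δR : ℝ, 0 < δR ∧ ∀ r ∈ Ioo (0 : ℝ) δR, ∀ z ∈ C, 0 < fC r z) ∧
    ∃ q q' : ℝ, 0 ≤ q ∧ q < 1 ∧ 0 ≤ q' ∧ ∀ z : S.Z, EzY S 2 z ≤ q * EzY S 1 z + q'

end IFP


/-!
`c ↦ u' ∘ c` turns `ρ` into the uniform distance on `S₀`, so a `ρ`-Cauchy sequence `cₙ` in `𝒞`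
gives a uniformly Cauchy sequence `u' ∘ cₙ`. Its uniform limit `h` is continuous, antitone in `a`
and satisfies `u'(a) ≤ h(a, z)`, and the limit policy is `(u')⁻¹ ∘ h`. The inverse of `u'` is
continuous on `(0, ∞)` because `t ↦ -log u'(eᵗ)` is an increasing continuous surjection of `ℝ`,
hence an order isomorphism.
-/

lemma StrictAntiOn.exists_continuousOn_rightInverse {φ : ℝ → ℝ} (hφ : StrictAntiOn φ (Ioi 0))
    (hφ_cont : ContinuousOn φ (Ioi 0)) (hφ_pos : ∀ x, 0 < x → 0 < φ x)
    (hφ_zero : Tendsto φ (nhdsWithin 0 (Ioi 0)) atTop) (hφ_top : Tendsto φ atTop (nhds 0)) :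
    ∃ ψ : ℝ → ℝ, ContinuousOn ψ (Ioi 0) ∧ ∀ y, 0 < y → 0 < ψ y ∧ φ (ψ y) = y := by
  set χ : ℝ → ℝ := fun t => -Real.log (φ (Real.exp t))
  have hχ_mono : StrictMono χ := fun s t hst =>
    neg_lt_neg <| Real.log_lt_log (hφ_pos _ (Real.exp_pos t))
      (hφ (Real.exp_pos s) (Real.exp_pos t) (Real.exp_lt_exp.2 hst))
  have hχ_cont : Continuous χ :=
    ((hφ_cont.comp_continuous Real.continuous_exp Real.exp_pos).log
      fun t => (hφ_pos _ (Real.exp_pos t)).ne').neg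
  have hχ_top : Tendsto χ atTop atTop := by
    have hφ_exp : Tendsto (fun t => φ (Real.exp t)) atTop (nhdsWithin 0 (Ioi 0)) :=
      tendsto_nhdsWithin_iff.2 ⟨hφ_top.comp Real.tendsto_exp_atTop,
        Eventually.of_forall fun t => hφ_pos _ (Real.exp_pos t)⟩
    exact tendsto_neg_atBot_atTop.comp (Real.tendsto_log_nhdsGT_zero.comp hφ_exp)
  have hχ_bot : Tendsto χ atBot atBot :=
    tendsto_neg_atTop_atBot.comp
      (Real.tendsto_log_atTop.comp (hφ_zero.comp Real.tendsto_exp_atBot_nhdsGT))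
  set e := StrictMono.orderIsoOfSurjective χ hχ_mono (hχ_cont.surjective hχ_top hχ_bot)
  refine ⟨fun y => Real.exp (e.symm (-Real.log y)), ?_, fun y hy => ⟨Real.exp_pos _, ?_⟩⟩
  · exact Real.continuous_exp.comp_continuousOn <| e.symm.continuous.comp_continuousOn <|
      (Real.continuousOn_log.mono fun y (hy : 0 < y) => hy.ne').neg
  · have hχe : χ (e.symm (-Real.log y)) = -Real.log y := e.apply_symm_apply _
    exact Real.log_injOn_pos (hφ_pos _ (Real.exp_pos _)) hy (neg_injective hχe)

namespace Util

variable (U : Util)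

lemma continuousOn_u' : ContinuousOn U.u' (Ioi 0) :=
  fun x hx => (U.hasDeriv2 x hx).continuousAt.continuousWithinAt

lemma strictAntiOn_u' : StrictAntiOn U.u' (Ioi 0) :=
  strictAntiOn_of_hasDerivWithinAt_neg (convex_Ioi 0) U.continuousOn_u'
    (fun x hx => (U.hasDeriv2 x (by simpa using hx)).hasDerivWithinAt)
    fun x hx => U.u''_neg x (by simpa using hx)

lemma exists_continuousOn_rightInverse_u' :
    ∃ ψ : ℝ → ℝ, ContinuousOn ψ (Ioi 0) ∧ ∀ y, 0 < y → 0 < ψ y ∧ U.u' (ψ y) = y :=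
  U.strictAntiOn_u'.exists_continuousOn_rightInverse U.continuousOn_u' U.u'_pos
    U.u'_tendsto_atTop U.u'_tendsto_zero

end Util

namespace IFP

variable {S : IFP E1 E2} {u' : ℝ → ℝ} {c d e g : ℝ → S.Z → ℝ}

lemma rho_nonneg (S : IFP E1 E2) (u' : ℝ → ℝ) (c d : ℝ → S.Z → ℝ) : 0 ≤ S.rho u' c d :=
  Real.sSup_nonneg (by rintro _ ⟨p, -, rfl⟩; exact abs_nonneg _)

lemma rho_le {r : ℝ} (hr : 0 ≤ r) (h : ∀ a z, 0 < a → |u' (c a z) - u' (d a z)| ≤ r) :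
    S.rho u' c d ≤ r :=
  Real.sSup_le (by rintro _ ⟨p, hp, rfl⟩; exact h p.1 p.2 hp) hr

lemma rho_self : S.rho u' c c = 0 :=
  le_antisymm (rho_le le_rfl fun _ _ _ => by simp) (rho_nonneg S u' c c)

lemma rho_comm : S.rho u' c d = S.rho u' d c := by
  simp only [rho, abs_sub_comm]

lemma abs_sub_le_rho (hc : S.MemC u' c) (hd : S.MemC u' d) {a : ℝ} (z : S.Z) (ha : 0 < a) :
    |u' (c a z) - u' (d a z)| ≤ S.rho u' c d := by
  obtain ⟨Mc, hMc⟩ := hc.2.2.2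
  obtain ⟨Md, hMd⟩ := hd.2.2.2
  refine le_csSup ⟨Mc + Md, ?_⟩ ⟨(a, z), ha, rfl⟩
  rintro _ ⟨p, hp, rfl⟩
  calc |u' (c p.1 p.2) - u' (d p.1 p.2)|
      ≤ |u' (c p.1 p.2) - u' p.1| + |u' p.1 - u' (d p.1 p.2)| := abs_sub_le _ _ _
    _ ≤ Mc + Md := add_le_add (hMc _ _ hp) (abs_sub_comm (u' _) _ ▸ hMd _ _ hp)

lemma rho_triangle (hc : S.MemC u' c) (hd : S.MemC u' d) (he : S.MemC u' e) :
    S.rho u' c e ≤ S.rho u' c d + S.rho u' d e :=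
  rho_le (add_nonneg (rho_nonneg S u' c d) (rho_nonneg S u' d e)) fun _ z ha =>
    (abs_sub_le _ _ _).trans (add_le_add (abs_sub_le_rho hc hd z ha) (abs_sub_le_rho hd he z ha))

lemma MemC.u'_le_u'_apply (U : Util) (hc : S.MemC U.u' c) {a : ℝ} (z : S.Z) (ha : 0 < a) :
    U.u' a ≤ U.u' (c a z) :=
  U.strictAntiOn_u'.antitoneOn (hc.2.2.1 a z ha).1 ha (hc.2.2.1 a z ha).2

lemma MemC.u'_apply_anti (U : Util) (hc : S.MemC U.u' c) (z : S.Z) {a b : ℝ} (ha : 0 < a)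
    (hab : a ≤ b) : U.u' (c b z) ≤ U.u' (c a z) :=
  U.strictAntiOn_u'.antitoneOn (hc.2.2.1 a z ha).1 (hc.2.2.1 b z (ha.trans_le hab)).1
    (hc.2.1 z a b ha hab)

lemma eq_of_rho_eq_zero (U : Util) (hc : S.MemC U.u' c) (hd : S.MemC U.u' d)
    (h : S.rho U.u' c d = 0) {a : ℝ} (z : S.Z) (ha : 0 < a) : c a z = d a z :=
  U.strictAntiOn_u'.injOn (hc.2.2.1 a z ha).1 (hd.2.2.1 a z ha).1 <|
    sub_eq_zero.1 <| abs_nonpos_iff.1 (h ▸ abs_sub_le_rho hc hd z ha)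

lemma uniformCauchySeqOn_of_rho_cauchy {f : ℕ → ℝ → S.Z → ℝ} (hf : ∀ n, S.MemC u' (f n))
    (hcauchy : ∀ ε : ℝ, 0 < ε → ∃ N : ℕ, ∀ p q : ℕ, N ≤ p → N ≤ q → S.rho u' (f p) (f q) < ε) :
    UniformCauchySeqOn (fun n p => u' (f n p.1 p.2)) atTop {p : ℝ × S.Z | 0 < p.1} :=
  Metric.uniformCauchySeqOn_iff.2 fun ε hε => (hcauchy ε hε).imp fun _ hN m hm n hn p hp =>
    (abs_sub_le_rho (hf m) (hf n) p.2 hp).trans_lt (hN m n hm hn)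

lemma tendsto_rho_of_tendstoUniformlyOn {f : ℕ → ℝ → S.Z → ℝ}
    (h : TendstoUniformlyOn (fun n p => u' (f n p.1 p.2)) (fun p => u' (g p.1 p.2)) atTop
      {p : ℝ × S.Z | 0 < p.1}) :
    Tendsto (fun n => S.rho u' (f n) g) atTop (nhds 0) := by
  refine Metric.tendsto_nhds.2 fun ε hε => ?_
  filter_upwards [Metric.tendstoUniformlyOn_iff.1 h (ε / 2) (half_pos hε)] with n hn
  rw [Real.dist_eq, sub_zero, abs_of_nonneg (rho_nonneg S u' _ g)]
  refine (rho_le (half_pos hε).le fun a z ha => ?_).trans_lt (half_lt_self hε)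
  rw [abs_sub_comm]
  exact (hn (a, z) ha).le

lemma memC_of_tendstoUniformlyOn (U : Util) {f : ℕ → ℝ → S.Z → ℝ} (hf : ∀ n, S.MemC U.u' (f n))
    (hg_cont : ContinuousOn (fun p : ℝ × S.Z => g p.1 p.2) {p : ℝ × S.Z | 0 < p.1})
    (hg_pos : ∀ a z, 0 < a → 0 < g a z)
    (h : TendstoUniformlyOn (fun n p => U.u' (f n p.1 p.2)) (fun p => U.u' (g p.1 p.2)) atTop
      {p : ℝ × S.Z | 0 < p.1}) :
    S.MemC U.u' g := by
  have hlim : ∀ a z, 0 < a → Tendsto (fun n => U.u' (f n a z)) atTop (nhds (U.u' (g a z))) :=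
    fun a z ha => h.tendsto_at (show (a, z) ∈ {p : ℝ × S.Z | 0 < p.1} from ha)
  refine ⟨hg_cont, fun z a b ha hab => ?_, fun a z ha => ⟨hg_pos a z ha, ?_⟩, ?_⟩
  · have hb := ha.trans_le hab
    rw [← U.strictAntiOn_u'.le_iff_ge (hg_pos b z hb) (hg_pos a z ha)]
    exact le_of_tendsto_of_tendsto' (hlim b z hb) (hlim a z ha) fun n =>
      (hf n).u'_apply_anti U z ha hab
  · rw [← U.strictAntiOn_u'.le_iff_ge ha (hg_pos a z ha)]
    exact ge_of_tendsto' (hlim a z ha) fun n => (hf n).u'_le_u'_apply U z ha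
  · obtain ⟨N, hN⟩ := (Metric.tendstoUniformlyOn_iff.1 h 1 one_pos).exists
    obtain ⟨M, hM⟩ := (hf N).2.2.2
    refine ⟨1 + M, fun a z ha => ?_⟩
    calc |U.u' (g a z) - U.u' a|
        ≤ |U.u' (g a z) - U.u' (f N a z)| + |U.u' (f N a z) - U.u' a| := abs_sub_le _ _ _
      _ ≤ 1 + M := add_le_add (hN (a, z) ha).le (hM a z ha)

theorem exists_memC_tendsto_rho_of_cauchy (U : Util) {f : ℕ → ℝ → S.Z → ℝ}
    (hf : ∀ n, S.MemC U.u' (f n))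
    (hcauchy : ∀ ε : ℝ, 0 < ε → ∃ N : ℕ, ∀ p q : ℕ, N ≤ p → N ≤ q → S.rho U.u' (f p) (f q) < ε) :
    ∃ g : ℝ → S.Z → ℝ, S.MemC U.u' g ∧ Tendsto (fun n => S.rho U.u' (f n) g) atTop (nhds 0) := by
  obtain ⟨ψ, hψ_cont, hψ⟩ := U.exists_continuousOn_rightInverse_u'
  have hcauchy_unif := uniformCauchySeqOn_of_rho_cauchy hf hcauchy
  set h : ℝ × S.Z → ℝ := fun p => limUnder atTop fun n => U.u' (f n p.1 p.2)
  have hh : TendstoUniformlyOn (fun n p => U.u' (f n p.1 p.2)) h atTop {p | 0 < p.1} :=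
    hcauchy_unif.tendstoUniformlyOn_of_tendsto fun p hp =>
      (hcauchy_unif.cauchySeq hp).tendsto_limUnder
  have hh_pos : ∀ p ∈ {p : ℝ × S.Z | 0 < p.1}, 0 < h p := fun p hp =>
    (U.u'_pos p.1 hp).trans_le <|
      ge_of_tendsto' (hh.tendsto_at hp) fun n => (hf n).u'_le_u'_apply U p.2 hp
  set g : ℝ → S.Z → ℝ := fun a z => ψ (h (a, z))
  have hg : TendstoUniformlyOn (fun n (p : ℝ × S.Z) => U.u' (f n p.1 p.2))
      (fun p => U.u' (g p.1 p.2)) atTop {p | 0 < p.1} :=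
    hh.congr_right fun p hp => ((hψ _ (hh_pos p hp)).2).symm
  have hh_cont : ContinuousOn h {p | 0 < p.1} :=
    hh.continuousOn <| Frequently.of_forall fun n => U.continuousOn_u'.comp (hf n).1
      fun p hp => ((hf n).2.2.1 p.1 p.2 hp).1
  exact ⟨g, memC_of_tendstoUniformlyOn U hf (hψ_cont.comp hh_cont hh_pos)
    (fun a z ha => (hψ _ (hh_pos (a, z) ha)).1) hg, tendsto_rho_of_tendstoUniformlyOn hg⟩

end IFP

/-- `ρ` is a metric on `𝒞` (nonnegative, zero exactly on the diagonal,
symmetric, satisfying the triangle inequality), and `(𝒞, ρ)` is complete: every `ρ`-Cauchy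
sequence in `𝒞` converges in `ρ` to an element of `𝒞`. -/
theorem statement_3 {E1 E2 : Type} [MeasurableSpace E1] [MeasurableSpace E2]
    (S : IFP E1 E2) (U : Util) :
    (∀ c d : ℝ → S.Z → ℝ, S.MemC U.u' c → S.MemC U.u' d → 0 ≤ S.rho U.u' c d) ∧
    (∀ c : ℝ → S.Z → ℝ, S.MemC U.u' c → S.rho U.u' c c = 0) ∧
    (∀ c d : ℝ → S.Z → ℝ, S.MemC U.u' c → S.MemC U.u' d →
      S.rho U.u' c d = 0 → ∀ (a : ℝ) (z : S.Z), 0 < a → c a z = d a z) ∧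
    (∀ c d : ℝ → S.Z → ℝ, S.MemC U.u' c → S.MemC U.u' d →
      S.rho U.u' c d = S.rho U.u' d c) ∧
    (∀ c d e : ℝ → S.Z → ℝ, S.MemC U.u' c → S.MemC U.u' d → S.MemC U.u' e →
      S.rho U.u' c e ≤ S.rho U.u' c d + S.rho U.u' d e) ∧
    (∀ f : ℕ → ℝ → S.Z → ℝ, (∀ n, S.MemC U.u' (f n)) →
      (∀ ε : ℝ, 0 < ε → ∃ N : ℕ, ∀ p q : ℕ, N ≤ p → N ≤ q → S.rho U.u' (f p) (f q) < ε) →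
      ∃ g : ℝ → S.Z → ℝ, S.MemC U.u' g ∧
        Filter.Tendsto (fun n => S.rho U.u' (f n) g) Filter.atTop (nhds 0)) :=
  ⟨fun c d _ _ => IFP.rho_nonneg S U.u' c d,
    fun _ _ => IFP.rho_self,
    fun _ _ hc hd h _ z ha => IFP.eq_of_rho_eq_zero U hc hd h z ha,
    fun _ _ _ _ => IFP.rho_comm,
    fun _ _ _ hc hd he => IFP.rho_triangle hc hd he,
    fun _ hf hcauchy => IFP.exists_memC_tendsto_rho_of_cauchy U hf hcauchy⟩
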